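/- (Norm bound for the minimal-norm interpolant.) Let l ∈ ℕ ∪ {∞} and let k ≥ 0 be an integer with λ_{k+1} > 0 and R_k > n; assume λ_i > 0 for all i ≤ l and, if l = ∞, that Σ_{i≥1} v_i²/λ_i < ∞. Then the predicted squared RKHS norm of the minimal-norm interpolant, N_0 = Σ_{i≥1} λ_i v_i²/(λ_i + κ_0)² + (R̃_0/n) · Σ_{i≥1} λ_i/(λ_i + κ_0)², satisfies N_0 ≤ Σ_{i≤l} v_i²/λ_i + (1 − n/R_k)^{−1} · n·(σ² + Σ_{i>l} v_i²)/(Σ_{i>k} λ_i). -/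

import Mathlib

/-!
Since `λ/(λ+κ₀)² = (L − L²)/κ₀` and `Σ L_i = n`, the factor `Σ λ_i/(λ_i+κ₀)²` equals
`(n − Σ L_i²)/κ₀` and cancels the overfitting coefficient, leaving
`N₀ = Σ v_i²/(λ_i+κ₀) + σ²/κ₀`. Each `v_i²/(λ_i+κ₀)` is at most `v_i²/λ_i` for `i ≤ l` and at
most `v_i²/κ₀` beyond. Finally Cauchy–Schwarz on the tail, with `λ_i² = L_i · λ_i(λ_i+κ₀)`, gives
`(Σ_{i>k} λ_i)² ≤ n (Σ_{i>k} λ_i² + κ₀ Σ_{i>k} λ_i)`, which rearranges to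
`1/κ₀ ≤ (1 − n/R_k)⁻¹ n / Σ_{i>k} λ_i`.
-/

theorem tsum_sq_le_tsum_mul_tsum_of_sq_le_mul {ι : Type*} {r f g : ι → ℝ}
    (hr : Summable r) (hf : Summable f) (hg : Summable g)
    (hf0 : ∀ i, 0 ≤ f i) (hg0 : ∀ i, 0 ≤ g i) (h : ∀ i, r i ^ 2 ≤ f i * g i) :
    (∑' i, r i) ^ 2 ≤ (∑' i, f i) * ∑' i, g i :=
  le_of_tendsto_of_tendsto' (hr.hasSum.pow 2) (Filter.Tendsto.mul hf.hasSum hg.hasSum) fun s =>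
    s.sum_sq_le_sum_mul_sum_of_sq_le_mul (fun i _ => hf0 i) (fun i _ => hg0 i) fun i _ => h i

theorem Summable.sq_of_nonneg {ι : Type*} {f : ι → ℝ} (hf : Summable f) (hf0 : 0 ≤ f) :
    Summable fun i => f i ^ 2 := by
  have hdiag : Function.Injective fun i : ι => (i, i) := fun _ _ h => congrArg Prod.fst h
  simpa only [sq, Function.comp_def] using (hf.mul_of_nonneg hf hf0 hf0).comp_injective hdiag

theorem div_add_lt_one {x κ : ℝ} (hκ : 0 < κ) (hx : 0 ≤ x) : x / (x + κ) < 1 :=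
  (div_lt_one (by linarith)).2 (by linarith)

theorem summable_subtype_coe_lt {f : ℕ → ℝ} {l : ℕ∞} (h : l = ⊤ → Summable f) :
    Summable fun i : {i : ℕ // (i : ℕ∞) < l} => f i := by
  induction l using ENat.recTopCoe with
  | top => exact (h rfl).subtype _
  | coe m =>
    have hfin : {i : ℕ | (i : ℕ∞) < m}.Finite :=
      (Set.finite_Iio m).subset fun i (hi : (i : ℕ∞) < m) => Set.mem_Iio.2 (by exact_mod_cast hi)
    exact hfin.summable f

section Learnability

variable {ι : Type*} {lam : ι → ℝ} {κ : ℝ}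

theorem summable_div_add_of_nonneg {f : ι → ℝ} (hlam : ∀ i, 0 ≤ lam i) (hκ : 0 < κ)
    (hf : Summable f) (hf0 : ∀ i, 0 ≤ f i) : Summable fun i => f i / (lam i + κ) :=
  (hf.div_const κ).of_nonneg_of_le (fun i => div_nonneg (hf0 i) (by linarith [hlam i]))
    fun i => div_le_div_of_nonneg_left (hf0 i) hκ (by linarith [hlam i])

theorem summable_sq_div_add (hlam : ∀ i, 0 ≤ lam i) (hκ : 0 < κ) (hsum : Summable lam) :
    Summable fun i => (lam i / (lam i + κ)) ^ 2 :=
  (summable_div_add_of_nonneg hlam hκ hsum hlam).of_nonneg_of_le (fun i => sq_nonneg _) fun i =>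
    pow_le_of_le_one (by have := hlam i; positivity) (div_add_lt_one hκ (hlam i)).le two_ne_zero

theorem tsum_sq_div_add_lt_tsum_div_add (hlam : ∀ i, 0 ≤ lam i) (hκ : 0 < κ)
    (hsum : Summable lam) (hpos : ∃ i, 0 < lam i) :
    ∑' i, (lam i / (lam i + κ)) ^ 2 < ∑' i, lam i / (lam i + κ) := by
  obtain ⟨j, hj⟩ := hpos
  refine Summable.tsum_lt_tsum (i := j) (fun i => ?_) ?_ (summable_sq_div_add hlam hκ hsum)
    (summable_div_add_of_nonneg hlam hκ hsum hlam)
  · exact pow_le_of_le_one (by have := hlam i; positivity) (div_add_lt_one hκ (hlam i)).le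
      two_ne_zero
  · exact pow_lt_self_of_lt_one₀ (by positivity) (div_add_lt_one hκ hj.le) one_lt_two

theorem tsum_div_add_sq_eq (hlam : ∀ i, 0 ≤ lam i) (hκ : 0 < κ) (hsum : Summable lam) :
    ∑' i, lam i / (lam i + κ) ^ 2
      = (∑' i, lam i / (lam i + κ) - ∑' i, (lam i / (lam i + κ)) ^ 2) / κ := by
  rw [← (summable_div_add_of_nonneg hlam hκ hsum hlam).tsum_sub (summable_sq_div_add hlam hκ hsum),
    ← tsum_div_const]
  refine tsum_congr fun i => ?_
  have : lam i + κ ≠ 0 := by linarith [hlam i]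
  field_simp
  ring

theorem tsum_mul_sq_div_add_sq_add_eq (hlam : ∀ i, 0 ≤ lam i) (hκ : 0 < κ) {v : ι → ℝ}
    (hv : Summable fun i => v i ^ 2) :
    ∑' i, lam i * v i ^ 2 / (lam i + κ) ^ 2
        + (∑' i, (1 - lam i / (lam i + κ)) ^ 2 * v i ^ 2) / κ
      = ∑' i, v i ^ 2 / (lam i + κ) := by
  have hid : ∀ i, lam i * v i ^ 2 / (lam i + κ) ^ 2
      + (1 - lam i / (lam i + κ)) ^ 2 * v i ^ 2 / κ = v i ^ 2 / (lam i + κ) := fun i => by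
    have : lam i + κ ≠ 0 := by linarith [hlam i]
    field_simp
    ring
  have hb := summable_div_add_of_nonneg hlam hκ hv fun i => sq_nonneg (v i)
  have ha : Summable fun i => lam i * v i ^ 2 / (lam i + κ) ^ 2 :=
    hb.of_nonneg_of_le (fun i => by have := hlam i; positivity) fun i =>
      (hid i).symm ▸ le_add_of_nonneg_right (by positivity)
  have hc : Summable fun i => (1 - lam i / (lam i + κ)) ^ 2 * v i ^ 2 / κ :=
    (hb.sub ha).congr fun i => by linarith [hid i]
  rw [← tsum_div_const, ← ha.tsum_add hc]
  exact tsum_congr hid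

theorem predicted_norm_eq (hlam : ∀ i, 0 ≤ lam i) (hκ : 0 < κ) (hsum : Summable lam)
    (hpos : ∃ i, 0 < lam i) {n : ℝ} (hn : ∑' i, lam i / (lam i + κ) = n) {v : ι → ℝ}
    (hv : Summable fun i => v i ^ 2) (σ2 : ℝ) :
    ∑' i, lam i * v i ^ 2 / (lam i + κ) ^ 2
        + n / (n - ∑' i, (lam i / (lam i + κ)) ^ 2)
          * (∑' i, (1 - lam i / (lam i + κ)) ^ 2 * v i ^ 2 + σ2) / n
          * ∑' i, lam i / (lam i + κ) ^ 2
      = ∑' i, v i ^ 2 / (lam i + κ) + σ2 / κ := by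
  have hD : 0 < n - ∑' i, (lam i / (lam i + κ)) ^ 2 :=
    hn ▸ sub_pos.2 (tsum_sq_div_add_lt_tsum_div_add hlam hκ hsum hpos)
  have hn0 : 0 < n := hD.trans_le (sub_le_self _ (tsum_nonneg fun i => sq_nonneg _))
  rw [tsum_div_add_sq_eq hlam hκ hsum, hn, ← tsum_mul_sq_div_add_sq_add_eq hlam hκ hv]
  generalize ∑' i, (lam i / (lam i + κ)) ^ 2 = S at hD ⊢
  field_simp
  ring

theorem sq_tsum_le_tsum_div_add_mul (hlam : ∀ i, 0 ≤ lam i) (hκ : 0 < κ) (hsum : Summable lam) :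
    (∑' i, lam i) ^ 2
      ≤ (∑' i, lam i / (lam i + κ)) * (∑' i, lam i ^ 2 + κ * ∑' i, lam i) := by
  have hsq := hsum.sq_of_nonneg hlam
  rw [← tsum_mul_left, ← hsq.tsum_add (hsum.mul_left κ)]
  refine tsum_sq_le_tsum_mul_tsum_of_sq_le_mul hsum
    (summable_div_add_of_nonneg hlam hκ hsum hlam) (hsq.add (hsum.mul_left κ))
    (fun i => by have := hlam i; positivity) (fun i => by have := hlam i; positivity)
    fun i => le_of_eq ?_
  have : lam i + κ ≠ 0 := by linarith [hlam i]
  field_simp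

theorem tsum_sq_div_add_le_tsum_subtype_add {v : ι → ℝ} (hlam : ∀ i, 0 ≤ lam i) (hκ : 0 < κ)
    (hv : Summable fun i => v i ^ 2) (s : Set ι) (hs_pos : ∀ i ∈ s, 0 < lam i)
    (hs : Summable fun i : s => v i ^ 2 / lam i) :
    ∑' i, v i ^ 2 / (lam i + κ) ≤ ∑' i : s, v i ^ 2 / lam i + (∑' i : ↥sᶜ, v i ^ 2) / κ := by
  rw [tsum_subtype s fun i => v i ^ 2 / lam i, tsum_subtype sᶜ fun i => v i ^ 2,
    ← tsum_div_const]
  have hs' := (summable_subtype_iff_indicator (f := fun i => v i ^ 2 / lam i) (s := s)).mp hs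
  have hsc := (summable_subtype_iff_indicator (s := sᶜ)).mp (hv.subtype sᶜ)
  rw [← hs'.tsum_add (hsc.div_const κ)]
  refine (summable_div_add_of_nonneg hlam hκ hv fun i => sq_nonneg _).tsum_le_tsum (fun i => ?_)
    (hs'.add (hsc.div_const κ))
  by_cases hi : i ∈ s
  · simp only [Set.indicator_of_mem hi, Set.indicator_of_notMem (Set.notMem_compl_iff.2 hi),
      zero_div, add_zero]
    exact div_le_div_of_nonneg_left (sq_nonneg _) (hs_pos i hi) (by linarith)
  · simp only [Set.indicator_of_notMem hi, Set.indicator_of_mem (Set.mem_compl hi), zero_add]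
    exact div_le_div_of_nonneg_left (sq_nonneg _) hκ (by linarith [hlam i])

end Learnability

theorem sq_tsum_nat_add_le {lam : ℕ → ℝ} {κ n : ℝ} (hlam : ∀ i, 0 ≤ lam i) (hκ : 0 < κ)
    (hsum : Summable lam) (hn : ∑' i, lam i / (lam i + κ) = n) (k : ℕ) :
    (∑' i, lam (k + i)) ^ 2 ≤ n * (∑' i, lam (k + i) ^ 2 + κ * ∑' i, lam (k + i)) := by
  refine (sq_tsum_le_tsum_div_add_mul (fun i => hlam (k + i)) hκ
    (hsum.comp_injective (add_right_injective k))).trans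
    (mul_le_mul_of_nonneg_right ?_ (add_nonneg (tsum_nonneg fun _ => sq_nonneg _)
      (mul_nonneg hκ.le (tsum_nonneg fun i => hlam (k + i)))))
  rw [← hn]
  exact tsum_comp_le_tsum_of_inj (summable_div_add_of_nonneg hlam hκ hsum hlam)
    (fun i => div_nonneg (hlam i) (by linarith [hlam i])) (add_right_injective k)

theorem tsum_sq_div_add_le_tsum_lt_add {lam v : ℕ → ℝ} {κ : ℝ} {l : ℕ∞} (hlam : ∀ i, 0 ≤ lam i)
    (hκ : 0 < κ) (hv : Summable fun i => v i ^ 2) (hlam_pos : ∀ i : ℕ, (i : ℕ∞) < l → 0 < lam i)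
    (hl_top : l = ⊤ → Summable fun i => v i ^ 2 / lam i) :
    ∑' i, v i ^ 2 / (lam i + κ)
      ≤ ∑' i : {i : ℕ // (i : ℕ∞) < l}, v i.1 ^ 2 / lam i.1
        + (∑' i : {i : ℕ // l ≤ (i : ℕ∞)}, v i.1 ^ 2) / κ := by
  have hcompl : {i : ℕ | (i : ℕ∞) < l}ᶜ = {i : ℕ | l ≤ i} := by
    ext
    simp
  have h := tsum_sq_div_add_le_tsum_subtype_add hlam hκ hv {i : ℕ | (i : ℕ∞) < l} hlam_pos
    (summable_subtype_coe_lt hl_top)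
  rwa [hcompl] at h

theorem div_le_inv_one_sub_div_mul_div {n κ T Q X : ℝ} (hn : 0 ≤ n) (hκ : 0 < κ) (hT : 0 < T)
    (hX : 0 ≤ X) (hnR : n < T ^ 2 / Q) (h : T ^ 2 ≤ n * (Q + κ * T)) :
    X / κ ≤ (1 - n / (T ^ 2 / Q))⁻¹ * (n * X / T) := by
  have hQ : 0 < Q := by
    by_contra! hQ
    linarith [div_nonpos_of_nonneg_of_nonpos (sq_nonneg T) hQ]
  have hR : 0 < 1 - n / (T ^ 2 / Q) := sub_pos.2 ((div_lt_one (hn.trans_lt hnR)).2 hnR)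
  have hRT : (1 - n / (T ^ 2 / Q)) * T ≤ n * κ := by
    have : (1 - n / (T ^ 2 / Q)) * T = (T ^ 2 - n * Q) / T := by field_simp
    rw [this, div_le_iff₀ hT]
    linarith
  rw [inv_mul_eq_div, le_div_iff₀ hR, div_mul_eq_mul_div, div_le_div_iff₀ hκ hT]
  nlinarith [mul_le_mul_of_nonneg_left hRT hX]

theorem norm_bound_min_norm_interpolant_general
    (n : ℕ)
    (lam : ℕ → ℝ) (hlam_nonneg : ∀ i, 0 ≤ lam i)
    (hlam_summable : Summable lam)
    (v : ℕ → ℝ) (hv : Summable fun i => v i ^ 2)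
    (σ2 : ℝ) (hσ2 : 0 ≤ σ2)
    (κ0 : ℝ) (hκ0 : 0 < κ0)
    (hκ0_eq : ∑' i, lam i / (lam i + κ0) = (n : ℝ))
    (E0 : ℝ)
    (hE0 : E0 = (n : ℝ) / ((n : ℝ) - ∑' i, (lam i / (lam i + κ0)) ^ 2))
    (Rt0 : ℝ)
    (hRt0 : Rt0 = E0 * (∑' i, (1 - lam i / (lam i + κ0)) ^ 2 * v i ^ 2 + σ2))
    (N0 : ℝ)
    (hN0 : N0 = ∑' i, lam i * v i ^ 2 / (lam i + κ0) ^ 2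
        + Rt0 / n * ∑' i, lam i / (lam i + κ0) ^ 2)
    (l : ℕ∞)
    (hlam_pos_l : ∀ i : ℕ, (i : ℕ∞) < l → 0 < lam i)
    (hl_top : l = ⊤ → Summable fun i => v i ^ 2 / lam i)
    (k : ℕ)
    (Rk : ℝ) (hRk : Rk = (∑' i, lam (k + i)) ^ 2 / ∑' i, lam (k + i) ^ 2)
    (hRkn : (n : ℝ) < Rk) :
    N0 ≤ (∑' i : {i : ℕ // (i : ℕ∞) < l}, v i.1 ^ 2 / lam i.1)
      + (1 - (n : ℝ) / Rk)⁻¹ *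
        ((n : ℝ) * (σ2 + ∑' i : {i : ℕ // l ≤ (i : ℕ∞)}, v i.1 ^ 2)
          / ∑' i, lam (k + i)) := by
  subst hN0 hRt0 hE0 hRk
  have hT : 0 < ∑' i, lam (k + i) := by
    refine (tsum_nonneg fun i => hlam_nonneg (k + i)).lt_of_ne fun hT => ?_
    rw [← hT, sq, zero_mul, zero_div] at hRkn
    exact hRkn.not_ge n.cast_nonneg
  have hpos : ∃ i, 0 < lam i := by
    by_contra! h
    exact hT.not_ge (tsum_nonpos fun i => h (k + i))
  have htail := sq_tsum_nat_add_le hlam_nonneg hκ0 hlam_summable hκ0_eq k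
  have hsplit := tsum_sq_div_add_le_tsum_lt_add hlam_nonneg hκ0 hv hlam_pos_l hl_top
  have hV : 0 ≤ ∑' i : {i : ℕ // l ≤ (i : ℕ∞)}, v i.1 ^ 2 := tsum_nonneg fun _ => sq_nonneg _
  have hnoise := div_le_inv_one_sub_div_mul_div n.cast_nonneg hκ0 hT (add_nonneg hσ2 hV) hRkn
    htail
  rw [add_div] at hnoise
  rw [predicted_norm_eq hlam_nonneg hκ0 hlam_summable hpos hκ0_eq hv]
  linarith

/-- Norm bound for the minimal-norm interpolant: For
`l ∈ ℕ ∪ {∞}` and `k ≥ 0` with `λ_{k+1} > 0` and `R_k > n`, assuming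
`λ_i > 0` for `i ≤ l` (and summability of `v_i²/λ_i` if `l = ∞`), the
predicted squared RKHS norm `N_0` of the minimal-norm interpolant satisfies
`N_0 ≤ Σ_{i≤l} v_i²/λ_i + (1 − n/R_k)⁻¹ · n·(σ² + Σ_{i>l} v_i²)/(Σ_{i>k} λ_i)`.
(Here `lam i`, `v i` denote `λ_{i+1}`, `v_{i+1}`; the 1-based condition
`i ≤ l` becomes `(i : ℕ∞) < l` for the 0-based index.) -/
theorem norm_bound_min_norm_interpolant
    (n : ℕ) (hn : 1 ≤ n)
    (lam : ℕ → ℝ) (hlam_nonneg : ∀ i, 0 ≤ lam i) (hlam_mono : Antitone lam)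
    (hlam_summable : Summable lam) (hlam_ne : ∃ i, lam i ≠ 0)
    (v : ℕ → ℝ) (hv : Summable fun i => v i ^ 2)
    (σ2 : ℝ) (hσ2 : 0 ≤ σ2)
    (κ0 : ℝ) (hκ0 : 0 < κ0)
    (hκ0_eq : ∑' i, lam i / (lam i + κ0) = (n : ℝ))
    (E0 : ℝ)
    (hE0 : E0 = (n : ℝ) / ((n : ℝ) - ∑' i, (lam i / (lam i + κ0)) ^ 2))
    (Rt0 : ℝ)
    (hRt0 : Rt0 = E0 * (∑' i, (1 - lam i / (lam i + κ0)) ^ 2 * v i ^ 2 + σ2))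
    (N0 : ℝ)
    (hN0 : N0 = ∑' i, lam i * v i ^ 2 / (lam i + κ0) ^ 2
        + Rt0 / n * ∑' i, lam i / (lam i + κ0) ^ 2)
    (l : ℕ∞)
    (hlam_pos_l : ∀ i : ℕ, (i : ℕ∞) < l → 0 < lam i)
    (hl_top : l = ⊤ → Summable fun i => v i ^ 2 / lam i)
    (k : ℕ) (hlamk : 0 < lam k)
    (Rk : ℝ) (hRk : Rk = (∑' i, lam (k + i)) ^ 2 / ∑' i, lam (k + i) ^ 2)
    (hRkn : (n : ℝ) < Rk) :
    N0 ≤ (∑' i : {i : ℕ // (i : ℕ∞) < l}, v i.1 ^ 2 / lam i.1)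
      + (1 - (n : ℝ) / Rk)⁻¹ *
        ((n : ℝ) * (σ2 + ∑' i : {i : ℕ // l ≤ (i : ℕ∞)}, v i.1 ^ 2)
          / ∑' i, lam (k + i)) :=
  norm_bound_min_norm_interpolant_general n lam hlam_nonneg hlam_summable v hv σ2 hσ2 κ0 hκ0 hκ0_eq
    E0 hE0 Rt0 hRt0 N0 hN0 l hlam_pos_l hl_top k Rk hRk hRkn
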